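/- arXiv:1610.01329 — 2 statements merged into one kernel-verified Lean document; each statement's English description precedes it below -/
import Mathlib

section
/- For integers ℓ ≥ 1 and 0 ≤ c < ℓ: -ϑ(z+1/2; τ) ϑ_{ℓ,c}(z;τ) = Σ_{a mod 2ℓ+1} θ_{ℓ(2ℓ+1), c - 2ℓa - ℓ}(τ) ϑ_{ℓ+1/2, a+c+1/2}(z;τ). -/
open Complex

/-- The q-Pochhammer symbol `(a;q)_∞ = ∏_{n ≥ 1} (1 - a q^{n-1})`. -/
noncomputable def qPoch (a q : ℂ) : ℂ := ∏' n : ℕ, (1 - a * q ^ n)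

/-- The Jacobi theta function `ϑ(z;τ) = ∑_{n ∈ 1/2 + ℤ} e^{πi n² τ + 2πi n (z + 1/2)}`. -/
noncomputable def jTheta (z τ : ℂ) : ℂ :=
  ∑' n : ℤ, Complex.exp ((Real.pi : ℂ) * I * ((n : ℂ) + 1/2) ^ 2 * τ +
    2 * (Real.pi : ℂ) * I * ((n : ℂ) + 1/2) * (z + 1/2))

/-- `ϑ_{m,a}(z;τ) = ∑_{n ∈ ℤ} q^{(2mn+a)²/(4m)} ζ^{2mn+a}` with `q = e^{2πiτ}`, `ζ = e^{2πiz}`,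
fractional powers interpreted via `q^x = e^{2πiτx}`, `ζ^x = e^{2πizx}`. -/
noncomputable def thetaMA (m a : ℝ) (z τ : ℂ) : ℂ :=
  ∑' n : ℤ, Complex.exp (2 * (Real.pi : ℂ) * I * τ * ((2 * m * n + a) ^ 2 / (4 * m)) +
    2 * (Real.pi : ℂ) * I * z * (2 * m * n + a))

/-- The theta constant `θ_{m,a}(τ) = ϑ_{m,a}(0;τ)`. -/
noncomputable def thetaC (m a : ℝ) (τ : ℂ) : ℂ := thetaMA m a 0 τ

/-!
Up to sign, `ϑ(z + 1/2; τ)` is `ϑ_{1/2,1/2}(z; τ)`, so the left-hand side is the double series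
`∑_{n,k} q^{(n+1/2)²/2 + (2ℓk+c)²/(4ℓ)} ζ^{n+1/2+2ℓk+c}`.
Writing `n - k = a - (2ℓ+1)s` with `a mod 2ℓ+1` and `k = t + s`, the exponent of `q` splits as
`(2ℓ(2ℓ+1)s + c - 2ℓa - ℓ)²/(4ℓ(2ℓ+1)) + ((2ℓ+1)t + a + c + 1/2)²/(2(2ℓ+1))`, which is a product
of a term of `θ_{ℓ(2ℓ+1), c-2ℓa-ℓ}` and a term of `ϑ_{ℓ+1/2, a+c+1/2}`.
Absolute convergence justifies the rearrangement.
-/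

lemma summable_norm_cexp_quadratic {τ : ℂ} (hτ : 0 < τ.im) {α : ℝ} (hα : 0 < α) (γ δ : ℂ) :
    Summable fun n : ℤ => ‖cexp (Real.pi * I * α * τ * n ^ 2 + 2 * Real.pi * I * n * γ + δ)‖ := by
  have him : 0 < ((α : ℂ) * τ).im := by simpa using mul_pos hα hτ
  have h_term : Summable fun n : ℤ => ‖jacobiTheta₂_term n γ (α * τ)‖ := by
    refine (summable_pow_mul_jacobiTheta₂_term_bound |γ.im| him 0).of_nonneg_of_le
      (fun _ => norm_nonneg _) fun n => ?_
    simpa only [pow_zero, one_mul] using norm_jacobiTheta₂_term_le him le_rfl le_rfl n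
  refine (h_term.mul_right ‖cexp δ‖).congr fun n => ?_
  rw [← norm_mul, jacobiTheta₂_term, ← Complex.exp_add]
  ring_nf

noncomputable def thetaMATerm (m a : ℝ) (z τ : ℂ) (n : ℤ) : ℂ :=
  cexp (2 * Real.pi * I * τ * ((2 * m * n + a) ^ 2 / (4 * m)) +
    2 * Real.pi * I * z * (2 * m * n + a))

lemma thetaMA_eq_tsum (m a : ℝ) (z τ : ℂ) : thetaMA m a z τ = ∑' n, thetaMATerm m a z τ n := rfl

lemma summable_norm_thetaMATerm {m : ℝ} (hm : 0 < m) (a : ℝ) (z : ℂ) {τ : ℂ} (hτ : 0 < τ.im) :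
    Summable fun n => ‖thetaMATerm m a z τ n‖ := by
  have hm' : (m : ℂ) ≠ 0 := by exact_mod_cast hm.ne'
  refine (summable_norm_cexp_quadratic hτ (α := 2 * m) (by positivity) (a * τ + 2 * m * z)
    (Real.pi * I * τ * a ^ 2 / (2 * m) + 2 * Real.pi * I * z * a)).congr fun n => ?_
  unfold thetaMATerm
  congr 2
  push_cast
  field_simp
  ring

lemma summable_thetaMATerm_mul_thetaMATerm {m m' : ℝ} (hm : 0 < m) (hm' : 0 < m') (a a' : ℝ)
    (z z' : ℂ) {τ τ' : ℂ} (hτ : 0 < τ.im) (hτ' : 0 < τ'.im) :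
    Summable fun p : ℤ × ℤ => thetaMATerm m a z τ p.1 * thetaMATerm m' a' z' τ' p.2 :=
  summable_mul_of_summable_norm (summable_norm_thetaMATerm hm a z hτ)
    (summable_norm_thetaMATerm hm' a' z' hτ')

lemma thetaMA_mul_thetaMA {m m' : ℝ} (hm : 0 < m) (hm' : 0 < m') (a a' : ℝ) (z z' : ℂ)
    {τ τ' : ℂ} (hτ : 0 < τ.im) (hτ' : 0 < τ'.im) :
    thetaMA m a z τ * thetaMA m' a' z' τ' =
      ∑' p : ℤ × ℤ, thetaMATerm m a z τ p.1 * thetaMATerm m' a' z' τ' p.2 :=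
  tsum_mul_tsum_of_summable_norm (summable_norm_thetaMATerm hm a z hτ)
    (summable_norm_thetaMATerm hm' a' z' hτ')

lemma jTheta_add_half (z τ : ℂ) : jTheta (z + 1 / 2) τ = -thetaMA (1 / 2) (1 / 2) z τ := by
  rw [jTheta, thetaMA_eq_tsum, ← tsum_neg]
  refine tsum_congr fun n => ?_
  have h_exponent : Real.pi * I * ((n : ℂ) + 1 / 2) ^ 2 * τ +
      2 * Real.pi * I * ((n : ℂ) + 1 / 2) * (z + 1 / 2 + 1 / 2) =
      (2 * Real.pi * I * τ * ((2 * (1 / 2 : ℝ) * n + (1 / 2 : ℝ)) ^ 2 / (4 * (1 / 2 : ℝ))) +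
        2 * Real.pi * I * z * (2 * (1 / 2 : ℝ) * n + (1 / 2 : ℝ))) +
      (n * (2 * Real.pi * I) + Real.pi * I) := by
    push_cast
    ring
  rw [thetaMATerm, h_exponent, Complex.exp_add, Complex.exp_add (n * _),
    Complex.exp_int_mul_two_pi_mul_I, Complex.exp_pi_mul_I]
  ring

/-- `(a, s, t) ↦ (t - 2ℓs + a, t + s)`, assembled from the division with remainder by `2ℓ + 1`. -/
def thetaReindex (ℓ : ℕ) : Fin (2 * ℓ + 1) × ℤ × ℤ ≃ ℤ × ℤ :=
  (Equiv.prodCongr (Equiv.refl _) (Equiv.prodShear (Equiv.refl ℤ) Equiv.addRight)).trans <|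
    (Equiv.prodAssoc _ _ _).symm.trans <|
    (Equiv.prodCongr ((Equiv.prodComm _ _).trans <|
      (Equiv.prodCongr (Equiv.neg ℤ) (Equiv.refl _)).trans (Int.divModEquiv _).symm)
      (Equiv.refl ℤ)).trans <|
    (Equiv.prodComm _ _).trans <|
    (Equiv.prodShear (Equiv.refl ℤ) Equiv.addLeft).trans (Equiv.prodComm _ _)

lemma thetaReindex_apply (ℓ : ℕ) (a : Fin (2 * ℓ + 1)) (s t : ℤ) :
    thetaReindex ℓ (a, s, t) = (t - 2 * ℓ * s + a, t + s) := by
  simp only [thetaReindex, Equiv.trans_apply, Equiv.prodCongr_apply, Equiv.coe_refl,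
    Equiv.prodShear_apply, Equiv.refl_apply, Equiv.coe_addRight, Prod.map_apply, id_eq,
    Equiv.prodAssoc_symm_apply, Equiv.coe_trans, Equiv.neg_apply, Equiv.coe_prodComm,
    Function.comp_apply, Prod.swap_prod_mk, Int.divModEquiv_symm_apply, Equiv.prodComm_apply,
    Equiv.coe_addLeft, Nat.cast_add, Nat.cast_mul, Nat.cast_ofNat, Nat.cast_one,
    Prod.mk.injEq, and_true]
  ring

lemma thetaMATerm_half_mul_thetaMATerm {ℓ : ℕ} (hℓ : ℓ ≠ 0) (c : ℝ) (a : ℕ) (s t : ℤ) (z τ : ℂ) :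
    thetaMATerm (1 / 2) (1 / 2) z τ (t - 2 * ℓ * s + a) * thetaMATerm ℓ c z τ (t + s) =
      thetaMATerm (ℓ * (2 * ℓ + 1)) (c - 2 * ℓ * a - ℓ) 0 τ s *
        thetaMATerm (ℓ + 1 / 2) (a + c + 1 / 2) z τ t := by
  have hℓ' : (ℓ : ℂ) ≠ 0 := by exact_mod_cast hℓ
  have h2ℓ : 2 * (ℓ : ℂ) + 1 ≠ 0 := by exact_mod_cast (2 * ℓ).succ_ne_zero
  simp only [thetaMATerm, ← Complex.exp_add]
  congr 1
  push_cast
  field_simp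
  ring

theorem theta_times_thetaMA_general (τ z : ℂ) (hτ : 0 < τ.im) (ℓ c : ℕ) (hℓ : 1 ≤ ℓ) :
    -(jTheta (z + 1/2) τ * thetaMA ℓ c z τ) =
      ∑ a ∈ Finset.range (2 * ℓ + 1),
        thetaC (ℓ * (2 * ℓ + 1)) ((c : ℝ) - 2 * ℓ * a - ℓ) τ *
          thetaMA ((ℓ : ℝ) + 1/2) ((a : ℝ) + c + 1/2) z τ := by
  have hℓ₀ : (0 : ℝ) < ℓ := by exact_mod_cast hℓ
  set F : ℤ × ℤ → ℂ := fun p => thetaMATerm (1 / 2) (1 / 2) z τ p.1 * thetaMATerm ℓ c z τ p.2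
  set Φ : ℕ → ℤ × ℤ → ℂ := fun a p =>
    thetaMATerm (ℓ * (2 * ℓ + 1)) (c - 2 * ℓ * a - ℓ) 0 τ p.1 *
      thetaMATerm (ℓ + 1 / 2) (a + c + 1 / 2) z τ p.2
  have hF : Summable F :=
    summable_thetaMATerm_mul_thetaMATerm (by norm_num) hℓ₀ _ _ _ _ hτ hτ
  have h_reindex (q : Fin (2 * ℓ + 1) × ℤ × ℤ) : F (thetaReindex ℓ q) = Φ q.1 q.2 := by
    obtain ⟨a, s, t⟩ := q
    rw [thetaReindex_apply]
    exact thetaMATerm_half_mul_thetaMATerm (by omega) _ _ _ _ _ _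
  have hΦ : Summable fun q : Fin (2 * ℓ + 1) × ℤ × ℤ => Φ q.1 q.2 :=
    ((thetaReindex ℓ).summable_iff.mpr hF).congr h_reindex
  have hΦ_fiber (a : Fin (2 * ℓ + 1)) : Summable (Φ a) :=
    summable_thetaMATerm_mul_thetaMATerm (by positivity) (by positivity) _ _ _ _ hτ hτ
  calc -(jTheta (z + 1/2) τ * thetaMA ℓ c z τ)
      = ∑' p, F p := by
        rw [jTheta_add_half, neg_mul, neg_neg]
        exact thetaMA_mul_thetaMA (by norm_num) hℓ₀ _ _ _ _ hτ hτ
    _ = ∑ a : Fin (2 * ℓ + 1), ∑' p, Φ a p := by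
        rw [← (thetaReindex ℓ).tsum_eq F, tsum_congr h_reindex, hΦ.tsum_prod' hΦ_fiber,
          tsum_fintype]
    _ = _ := by
        rw [Fin.sum_univ_eq_sum_range (fun a => ∑' p, Φ a p)]
        refine Finset.sum_congr rfl fun a _ => ?_
        rw [thetaC, thetaMA_mul_thetaMA (by positivity) (by positivity) _ _ _ _ hτ hτ]

/-- Lemma 3.3: theta decomposition of `-ϑ(z+1/2;τ) ϑ_{ℓ,c}(z;τ)`. -/
theorem theta_times_thetaMA (τ z : ℂ) (hτ : 0 < τ.im) (ℓ c : ℕ) (hℓ : 1 ≤ ℓ) (hc : c < ℓ) :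
    -(jTheta (z + 1/2) τ * thetaMA ℓ c z τ) =
      ∑ a ∈ Finset.range (2 * ℓ + 1),
        thetaC (ℓ * (2 * ℓ + 1)) ((c : ℝ) - 2 * ℓ * a - ℓ) τ *
          thetaMA ((ℓ : ℝ) + 1/2) ((a : ℝ) + c + 1/2) z τ :=
  theta_times_thetaMA_general τ z hτ ℓ c hℓ
end

section
/- Theta relation: θ_{2,2}(τ) θ_{6,0}(τ) + θ_{2,0}(τ) θ_{6,6}(τ) = 2 θ_{2,1}(τ) θ_{6,3}(τ). -/
open Complex

open Real

/-!
Both sides are theta series of the norm form `u² + 3v²` of `ℤ[√-3]`: expanding the products,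
the left side is `∑ q^{(u² + 3v²)/8}` over `(u, v) ≡ (2, 0), (0, 2) mod 4`, and the right side
is the same sum over `(u, v) ≡ (1, 1) mod 4` counted twice, i.e. over
`(u, v) ≡ (1, 1), (3, 3) mod 4`, since `(u, v) ↦ (-u, -v)` swaps the last two classes.
The involution `(u, v) ↦ ((u + 3v)/2, (u - v)/2)`, which is `z ↦ conj (z · (1 - √-3)/2)`
for `z = u + v√-3`, preserves the norm and exchanges the two index sets.
-/

def quadForm (x : ℤ × ℤ) : ℤ := x.1 ^ 2 + 3 * x.2 ^ 2

noncomputable def thetaTerm (τ : ℂ) (x : ℤ × ℤ) : ℂ := cexp (π * I * τ / 4 * quadForm x)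

def coset (a b : ℤ) : Set (ℤ × ℤ) := {x | x.1 ≡ a [ZMOD 4] ∧ x.2 ≡ b [ZMOD 4]}

def eisensteinSwap (x : ℤ × ℤ) : ℤ × ℤ := ((x.1 + 3 * x.2) / 2, (x.1 - x.2) / 2)

lemma quadForm_neg (x : ℤ × ℤ) : quadForm (-x) = quadForm x := by
  simp [quadForm]

lemma quadForm_eisensteinSwap {x : ℤ × ℤ} (hx : x.1 ≡ x.2 [ZMOD 2]) :
    quadForm (eisensteinSwap x) = quadForm x := by
  obtain ⟨u, v⟩ := x
  have hu : 2 * ((u + 3 * v) / 2) = u + 3 * v := by rw [Int.ModEq] at hx; omega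
  have hv : 2 * ((u - v) / 2) = u - v := by rw [Int.ModEq] at hx; omega
  have h4 : 4 * quadForm (eisensteinSwap (u, v)) = 4 * quadForm (u, v) := by
    calc 4 * quadForm (eisensteinSwap (u, v))
        = (2 * ((u + 3 * v) / 2)) ^ 2 + 3 * (2 * ((u - v) / 2)) ^ 2 := by
          simp only [quadForm, eisensteinSwap]; ring
      _ = 4 * quadForm (u, v) := by rw [hu, hv, quadForm]; ring
  omega

lemma eisensteinSwap_eisensteinSwap {x : ℤ × ℤ} (hx : x.1 ≡ x.2 [ZMOD 2]) :
    eisensteinSwap (eisensteinSwap x) = x := by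
  rw [Int.ModEq] at hx
  ext <;> simp only [eisensteinSwap] <;> omega

lemma eisensteinSwap_mem_of_mem_even {x : ℤ × ℤ} (hx : x ∈ coset 2 0 ∪ coset 0 2) :
    eisensteinSwap x ∈ coset 1 1 ∪ coset 3 3 := by
  simp only [coset, Set.mem_union, Set.mem_ofPred_eq, Int.ModEq, eisensteinSwap] at hx ⊢
  omega

lemma eisensteinSwap_mem_of_mem_odd {x : ℤ × ℤ} (hx : x ∈ coset 1 1 ∪ coset 3 3) :
    eisensteinSwap x ∈ coset 2 0 ∪ coset 0 2 := by
  simp only [coset, Set.mem_union, Set.mem_ofPred_eq, Int.ModEq, eisensteinSwap] at hx ⊢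
  omega

lemma fst_modEq_snd_of_mem_union {a b a' b' : ℤ} (hab : a ≡ b [ZMOD 2])
    (hab' : a' ≡ b' [ZMOD 2]) {x : ℤ × ℤ} (hx : x ∈ coset a b ∪ coset a' b') :
    x.1 ≡ x.2 [ZMOD 2] := by
  have h2 : (2 : ℤ) ∣ 4 := by norm_num
  rcases hx with ⟨h₁, h₂⟩ | ⟨h₁, h₂⟩
  · exact ((h₁.of_dvd h2).trans hab).trans (h₂.of_dvd h2).symm
  · exact ((h₁.of_dvd h2).trans hab').trans (h₂.of_dvd h2).symm

def eisensteinSwapEquiv : ↥(coset 2 0 ∪ coset 0 2) ≃ ↥(coset 1 1 ∪ coset 3 3) where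
  toFun x := ⟨eisensteinSwap x, eisensteinSwap_mem_of_mem_even x.2⟩
  invFun x := ⟨eisensteinSwap x, eisensteinSwap_mem_of_mem_odd x.2⟩
  left_inv x := by
    ext1
    exact eisensteinSwap_eisensteinSwap (fst_modEq_snd_of_mem_union (by decide) (by decide) x.2)
  right_inv x := by
    ext1
    exact eisensteinSwap_eisensteinSwap (fst_modEq_snd_of_mem_union (by decide) (by decide) x.2)

def cosetEquiv (a b : ℤ) : ℤ × ℤ ≃ coset a b where
  toFun n := ⟨(4 * n.1 + a, 4 * n.2 + b), by simp [coset, Int.ModEq]⟩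
  invFun x := ((x.1.1 - a) / 4, (x.1.2 - b) / 4)
  left_inv n := by ext <;> simp
  right_inv x := by
    obtain ⟨⟨u, v⟩, hu, hv⟩ := x
    rw [Int.ModEq] at hu hv
    ext <;> simp only <;> omega

lemma disjoint_coset {a b a' b' : ℤ} (h : ¬(a ≡ a' [ZMOD 4] ∧ b ≡ b' [ZMOD 4])) :
    Disjoint (coset a b) (coset a' b') :=
  Set.disjoint_left.2 fun _ hx hx' => h ⟨hx.1.symm.trans hx'.1, hx.2.symm.trans hx'.2⟩

lemma thetaTerm_eq_mul (τ : ℂ) (x : ℤ × ℤ) :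
    thetaTerm τ x = jacobiTheta₂_term x.1 0 (τ / 4) * jacobiTheta₂_term x.2 0 (3 * τ / 4) := by
  simp only [thetaTerm, quadForm, jacobiTheta₂_term, ← Complex.exp_add]
  push_cast
  ring_nf

lemma summable_thetaTerm {τ : ℂ} (hτ : 0 < τ.im) : Summable (thetaTerm τ) := by
  have h₁ := (summable_jacobiTheta₂_term_iff 0 (τ / 4)).2 (by simpa using hτ)
  have h₂ := (summable_jacobiTheta₂_term_iff 0 (3 * τ / 4)).2 (by simpa using hτ)
  refine .of_norm ?_
  simpa only [thetaTerm_eq_mul] using h₁.norm.mul_norm h₂.norm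

lemma thetaC_two (τ : ℂ) (a : ℤ) :
    thetaC 2 a τ = ∑' n : ℤ, jacobiTheta₂_term (4 * n + a) 0 (τ / 4) := by
  refine tsum_congr fun n => ?_
  simp only [jacobiTheta₂_term]
  congr 1
  push_cast
  ring

lemma thetaC_six (τ : ℂ) (b : ℤ) :
    thetaC 6 (3 * b) τ = ∑' n : ℤ, jacobiTheta₂_term (4 * n + b) 0 (3 * τ / 4) := by
  refine tsum_congr fun n => ?_
  simp only [jacobiTheta₂_term]
  congr 1
  push_cast
  ring

lemma thetaC_two_mul_thetaC_six {τ : ℂ} (hτ : 0 < τ.im) (a b : ℤ) :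
    thetaC 2 a τ * thetaC 6 (3 * b) τ = ∑' x : coset a b, thetaTerm τ x := by
  have hinj (c : ℤ) : Function.Injective fun n : ℤ => 4 * n + c := fun m n h => by
    simp only at h; omega
  have h₁ := ((summable_jacobiTheta₂_term_iff 0 (τ / 4)).2 (by simpa using hτ)).norm
  have h₂ := ((summable_jacobiTheta₂_term_iff 0 (3 * τ / 4)).2 (by simpa using hτ)).norm
  rw [thetaC_two, thetaC_six, tsum_mul_tsum_of_summable_norm (h₁.comp_injective (hinj a))
    (h₂.comp_injective (hinj b)), ← (cosetEquiv a b).tsum_eq]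
  simp [cosetEquiv, thetaTerm_eq_mul]

lemma tsum_thetaTerm_coset_neg (τ : ℂ) :
    ∑' x : coset 3 3, thetaTerm τ x = ∑' x : coset 1 1, thetaTerm τ x := by
  let e : coset 1 1 ≃ coset 3 3 := (Equiv.neg _).subtypeEquiv fun x => by
    simp only [coset, Set.mem_ofPred_eq, Int.ModEq, Equiv.neg_apply, Prod.fst_neg, Prod.snd_neg]
    omega
  rw [← e.tsum_eq]
  simp [e, thetaTerm, quadForm_neg]

lemma tsum_thetaTerm_eisensteinSwap (τ : ℂ) :
    ∑' x : ↥(coset 2 0 ∪ coset 0 2), thetaTerm τ x =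
      ∑' x : ↥(coset 1 1 ∪ coset 3 3), thetaTerm τ x := by
  rw [← eisensteinSwapEquiv.tsum_eq]
  refine tsum_congr fun x => ?_
  simp only [eisensteinSwapEquiv, Equiv.coe_fn_mk, thetaTerm]
  rw [quadForm_eisensteinSwap (fst_modEq_snd_of_mem_union (by decide) (by decide) x.2)]

/-- Theta relation (3.12). -/
theorem theta_relation_A (τ : ℂ) (hτ : 0 < τ.im) :
    thetaC 2 2 τ * thetaC 6 0 τ + thetaC 2 0 τ * thetaC 6 6 τ =
      2 * thetaC 2 1 τ * thetaC 6 3 τ := by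
  have tsum_union {s t : Set (ℤ × ℤ)} (hst : Disjoint s t) :
      ∑' x : ↥(s ∪ t), thetaTerm τ x = ∑' x : s, thetaTerm τ x + ∑' x : t, thetaTerm τ x :=
    Summable.tsum_union_disjoint hst ((summable_thetaTerm hτ).subtype s)
      ((summable_thetaTerm hτ).subtype t)
  have h₂₀ := thetaC_two_mul_thetaC_six hτ 2 0
  have h₀₂ := thetaC_two_mul_thetaC_six hτ 0 2
  have h₁₁ := thetaC_two_mul_thetaC_six hτ 1 1
  norm_num only at h₂₀ h₀₂ h₁₁
  rw [h₂₀, h₀₂, mul_assoc, h₁₁, two_mul]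
  calc _ = ∑' x : ↥(coset 2 0 ∪ coset 0 2), thetaTerm τ x :=
        (tsum_union (disjoint_coset (by decide))).symm
    _ = ∑' x : ↥(coset 1 1 ∪ coset 3 3), thetaTerm τ x := tsum_thetaTerm_eisensteinSwap τ
    _ = _ := by rw [tsum_union (disjoint_coset (by decide)), tsum_thetaTerm_coset_neg]
end
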